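/- arXiv:1612.01818 — 6 statements merged into one kernel-verified Lean document; each statement's English description precedes it below -/
import Mathlib

section
/- Let H = D₈ × C₂^(m-3) where D₈ = ⟨a,b | a⁴ = b² = (ab)² = 1⟩ and the C₂ factors are generated by involutions c₁,…,c_{m-3}, with m ≥ 4. Then the map x defined on generators by a ↦ a⁻¹, b ↦ ab, c_{2i+1} ↦ c_{2i+1}, c_{2i+2} ↦ a²c_{2i+1}c_{2i+2} (for 0 ≤ i ≤ ⌊(m-5)/2⌋), and additionally c_{m-3} ↦ a²c_{m-3} if m is even, extends to an automorphism of H of order 2. -/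
/-- `H = D₈ × C₂^(m-3)`, the direct product of the dihedral group of order 8
(`DihedralGroup 4` in Mathlib) and an elementary abelian 2-group of rank `m - 3`. -/
abbrev Hgrp (m : ℕ) := DihedralGroup 4 × Multiplicative (Fin (m - 3) → ZMod 2)

/-- The element `a`, of order 4. -/
def aElt (m : ℕ) : Hgrp m := (DihedralGroup.r 1, 1)

/-- The involution `b`, with `b * a * b = a⁻¹`. -/
def bElt (m : ℕ) : Hgrp m := (DihedralGroup.sr 0, 1)

/-- The involution `c j` for `1 ≤ j ≤ m - 3`; by convention `c j = 1` for `j = 0`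
(covering `c₋₁ = c₀ = 1`) and for `j > m - 3`. -/
def cElt (m j : ℕ) : Hgrp m :=
  (1, Multiplicative.ofAdd (fun i : Fin (m - 3) => if (i : ℕ) + 1 = j then 1 else 0))

/-!
Write `H = D₈ × V` with `V = 𝔽₂^(m-3)`, and `z = a²`, which is central. The automorphism is
`(d, v) ↦ (ψ d · z^{σ v}, T v)`, where `ψ` is the outer automorphism `a ↦ a⁻¹, b ↦ ab` of `D₈`,
`T = 1 + N` with `N` the nilpotent matrix sending `c_{2i+2}` to `c_{2i+1}`, and `σ` is the linear
form that is `1` on the `c_{2i+2}` and, for even `m`, on `c_{m-3}`. Centrality of `z` makes this a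
homomorphism; it is an involution because `ψ² = 1`, `T² = 1 + 2N + N² = 1`, `σ ∘ N = 0` and
`ψ(z) z = 1`.
-/

open Matrix

namespace DihedralGroup

variable {n : ℕ}

def negAffineHom (k : ZMod n) : DihedralGroup n →* DihedralGroup n where
  toFun
    | r i => r (-i)
    | sr i => sr (k - i)
  map_one' := by rw [one_def]; simp
  map_mul' := by
    rintro (i | i) (j | j) <;> simp only [r_mul_r, r_mul_sr, sr_mul_r, sr_mul_sr] <;>
      congr 1 <;> ring

@[simp] lemma negAffineHom_r (k i : ZMod n) : negAffineHom k (r i) = r (-i) := rfl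

@[simp] lemma negAffineHom_sr (k i : ZMod n) : negAffineHom k (sr i) = sr (k - i) := rfl

lemma negAffineHom_involutive (k : ZMod n) : Function.Involutive (negAffineHom k) := by
  rintro (i | i) <;> simp

lemma negAffineHom_r_mul_r (k i : ZMod n) : negAffineHom k (r i) * r i = 1 := by
  rw [negAffineHom_r, r_mul_r, neg_add_cancel, r_zero]

lemma commute_r_of_two_mul_eq_zero {i : ZMod n} (hi : 2 * i = 0) (g : DihedralGroup n) :
    Commute g (r i) := by
  rcases g with j | j
  · simp only [Commute, SemiconjBy, r_mul_r, add_comm]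
  · simp only [Commute, SemiconjBy, sr_mul_r, r_mul_sr]
    congr 1
    linear_combination hi

end DihedralGroup

open DihedralGroup

def zmodTwoPowHom {M : Type*} [Monoid M] (z : M) (hz : z ^ 2 = 1) :
    Multiplicative (ZMod 2) →* M where
  toFun s := z ^ s.toAdd.val
  map_one' := pow_zero z
  map_mul' s t := by
    rw [toAdd_mul, ZMod.val_add, ← pow_add, ← pow_eq_pow_mod _ hz]

section TwistedProd

variable {G V : Type*} [Group G] [Group V]

def twistedProdHom (ψ : G →* G) (χ : V →* G) (hχ : ∀ g v, Commute (ψ g) (χ v))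
    (T : V →* V) : G × V →* G × V :=
  (ψ.noncommCoprod χ hχ).prod (T.comp (MonoidHom.snd G V))

@[simp] lemma twistedProdHom_apply (ψ : G →* G) (χ : V →* G)
    (hχ : ∀ g v, Commute (ψ g) (χ v)) (T : V →* V) (p : G × V) :
    twistedProdHom ψ χ hχ T p = (ψ p.1 * χ p.2, T p.2) := rfl

lemma twistedProdHom_involutive {ψ : G →* G} {χ : V →* G} (hχ : ∀ g v, Commute (ψ g) (χ v))
    {T : V →* V} (hψ : Function.Involutive ψ) (hT : Function.Involutive T)
    (hψχ : ∀ v, ψ (χ v) * χ (T v) = 1) : Function.Involutive (twistedProdHom ψ χ hχ T) := by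
  rintro ⟨g, v⟩
  simp [mul_assoc, hψ g, hT v, hψχ v]

end TwistedProd

def MonoidHom.toMulAutOfInvolutive {M : Type*} [Monoid M] (f : M →* M)
    (hf : Function.Involutive f) : MulAut M :=
  f.toMulEquiv f (MonoidHom.ext hf) (MonoidHom.ext hf)

lemma MonoidHom.orderOf_toMulAutOfInvolutive {M : Type*} [Monoid M] {f : M →* M}
    (hf : Function.Involutive f) {x : M} (hx : f x ≠ x) :
    orderOf (f.toMulAutOfInvolutive hf) = 2 :=
  orderOf_eq_prime (MulEquiv.ext hf) fun h => hx (DFunLike.congr_fun h x)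

section PairShift

variable (n : ℕ)

-- Coordinate `i : Fin n` carries the generator `c_{i+1}`.
def pairShiftMatrix : Matrix (Fin n) (Fin n) (ZMod 2) :=
  Matrix.of fun i j => if Even (i : ℕ) ∧ (j : ℕ) = i + 1 then 1 else 0

def twistWeight : Fin n → ZMod 2 :=
  fun k => if Odd (k : ℕ) ∨ ((k : ℕ) + 1 = n ∧ Odd n) then 1 else 0

lemma pairShiftMatrix_mul_self : pairShiftMatrix n * pairShiftMatrix n = 0 := by
  ext i k
  simp only [mul_apply, pairShiftMatrix, of_apply, Matrix.zero_apply]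
  refine Finset.sum_eq_zero fun j _ => ?_
  split_ifs with hij hjk <;> simp_all [Nat.even_add_one]

lemma one_add_pairShiftMatrix_mul_self :
    (1 + pairShiftMatrix n) * (1 + pairShiftMatrix n) = 1 := by
  have hchar : pairShiftMatrix n + pairShiftMatrix n = 0 := by
    ext; simp [CharTwo.add_self_eq_zero]
  calc (1 + pairShiftMatrix n) * (1 + pairShiftMatrix n)
      = 1 + (pairShiftMatrix n + pairShiftMatrix n) + pairShiftMatrix n * pairShiftMatrix n := by
        noncomm_ring
    _ = 1 := by rw [hchar, pairShiftMatrix_mul_self, add_zero, add_zero]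

lemma twistWeight_vecMul_pairShiftMatrix : twistWeight n ᵥ* pairShiftMatrix n = 0 := by
  ext j
  simp only [vecMul, dotProduct, twistWeight, pairShiftMatrix, of_apply, Pi.zero_apply]
  refine Finset.sum_eq_zero fun i _ => ?_
  split_ifs with hi hij
  · rcases hi with hodd | ⟨hlast, -⟩
    · exact absurd hij.1 (Nat.not_even_iff_odd.2 hodd)
    · exact absurd j.isLt (by omega)
  all_goals simp

variable {n}

lemma one_add_pairShiftMatrix_mulVec_single_of_even {j : Fin n} (hj : Even (j : ℕ)) :
    (1 + pairShiftMatrix n) *ᵥ Pi.single j 1 = Pi.single j 1 := by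
  ext k
  have : ¬ (Even (k : ℕ) ∧ (j : ℕ) = k + 1) := fun h => by
    rw [h.2, Nat.even_add_one] at hj; exact hj h.1
  simp [pairShiftMatrix, one_apply, Pi.single_apply, this, eq_comm]

lemma one_add_pairShiftMatrix_mulVec_single_of_eq_succ {i j : Fin n} (hi : Even (i : ℕ))
    (hij : (j : ℕ) = i + 1) :
    (1 + pairShiftMatrix n) *ᵥ Pi.single j 1 = Pi.single i 1 + Pi.single j 1 := by
  ext k
  have hji : j ≠ i := fun h => by rw [h] at hij; omega
  by_cases hki : k = i
  · subst hki; simp [pairShiftMatrix, one_apply, hi, hij, hji.symm]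
  · have hk : ¬ (Even (k : ℕ) ∧ (j : ℕ) = k + 1) := fun h => hki (Fin.ext (by omega))
    simp [pairShiftMatrix, one_apply, Pi.single_apply, hk, hki, eq_comm]

end PairShift

section TwistAut

variable (n : ℕ)

def twistCharacter : Multiplicative (Fin n → ZMod 2) →* DihedralGroup 4 :=
  (zmodTwoPowHom (r 2) (by decide)).comp
    (AddMonoidHom.toMultiplicative (AddMonoidHom.mk' (twistWeight n ⬝ᵥ ·) (dotProduct_add _)))

def pairTransvection : Multiplicative (Fin n → ZMod 2) →* Multiplicative (Fin n → ZMod 2) :=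
  AddMonoidHom.toMultiplicative (1 + pairShiftMatrix n).mulVecLin.toAddMonoidHom

lemma twistCharacter_pairTransvection (v : Multiplicative (Fin n → ZMod 2)) :
    twistCharacter n (pairTransvection n v) = twistCharacter n v := by
  simp [twistCharacter, pairTransvection, dotProduct_mulVec, twistWeight_vecMul_pairShiftMatrix]

lemma pairTransvection_involutive : Function.Involutive (pairTransvection n) := fun v => by
  change Multiplicative.ofAdd ((1 + pairShiftMatrix n) *ᵥ ((1 + pairShiftMatrix n) *ᵥ v.toAdd)) = v
  rw [mulVec_mulVec, one_add_pairShiftMatrix_mul_self, one_mulVec, ofAdd_toAdd]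

lemma negAffineHom_twistCharacter_mul (k : ZMod 4) (v : Multiplicative (Fin n → ZMod 2)) :
    negAffineHom k (twistCharacter n v) * twistCharacter n v = 1 := by
  change negAffineHom k (r 2 ^ _) * r 2 ^ _ = 1
  rw [r_pow]
  exact negAffineHom_r_mul_r _ _

def twistAut : MulAut (DihedralGroup 4 × Multiplicative (Fin n → ZMod 2)) :=
  (twistedProdHom (negAffineHom (-1)) (twistCharacter n)
    (fun _ _ => commute_r_of_two_mul_eq_zero (by decide) _ |>.pow_right _)
    (pairTransvection n)).toMulAutOfInvolutive <|
    twistedProdHom_involutive _ (negAffineHom_involutive _) (pairTransvection_involutive n)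
      fun v => by rw [twistCharacter_pairTransvection, negAffineHom_twistCharacter_mul]

lemma twistAut_apply (p : DihedralGroup 4 × Multiplicative (Fin n → ZMod 2)) :
    twistAut n p = (negAffineHom (-1) p.1 * r 2 ^ (twistWeight n ⬝ᵥ p.2.toAdd).val,
      .ofAdd ((1 + pairShiftMatrix n) *ᵥ p.2.toAdd)) := rfl

lemma orderOf_twistAut : orderOf (twistAut n) = 2 := by
  refine MonoidHom.orderOf_toMulAutOfInvolutive _ (x := ((r 1, 1) : DihedralGroup 4 × _)) ?_
  change twistAut n (r 1, 1) ≠ (r 1, 1)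
  simp [twistAut_apply]
  decide

variable {n}

lemma twistAut_single (p : Fin n) :
    twistAut n (1, .ofAdd (Pi.single p 1)) =
      (r 2 ^ (twistWeight n p).val, .ofAdd ((1 + pairShiftMatrix n) *ᵥ Pi.single p 1)) := by
  simp [twistAut_apply]

end TwistAut

lemma cElt_succ {m : ℕ} (p : Fin (m - 3)) : cElt m (p + 1) = (1, .ofAdd (Pi.single p 1)) := by
  unfold cElt
  congr 2
  funext i
  simp [Pi.single_apply, Fin.ext_iff]

lemma aElt_sq (m : ℕ) : aElt m ^ 2 = (r 2, 1) := rfl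

lemma twistAut_aElt (m : ℕ) : twistAut (m - 3) (aElt m) = (aElt m)⁻¹ := by
  simp [twistAut_apply, aElt]

lemma twistAut_bElt (m : ℕ) : twistAut (m - 3) (bElt m) = aElt m * bElt m := by
  simp [twistAut_apply, aElt, bElt]

lemma twistAut_cElt_odd {m i : ℕ} (hi : 2 * i + 2 ≤ m - 3) :
    twistAut (m - 3) (cElt m (2 * i + 1)) = cElt m (2 * i + 1) := by
  have hw : twistWeight (m - 3) ⟨2 * i, by omega⟩ = 0 := by
    simp [twistWeight]; omega
  rw [cElt_succ ⟨2 * i, by omega⟩, twistAut_single, hw,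
    one_add_pairShiftMatrix_mulVec_single_of_even (by simp)]
  simp

lemma twistAut_cElt_even {m i : ℕ} (hi : 2 * i + 2 ≤ m - 3) :
    twistAut (m - 3) (cElt m (2 * i + 2)) =
      aElt m ^ 2 * cElt m (2 * i + 1) * cElt m (2 * i + 2) := by
  have hw : twistWeight (m - 3) ⟨2 * i + 1, by omega⟩ = 1 := if_pos (Or.inl ⟨i, rfl⟩)
  rw [cElt_succ ⟨2 * i + 1, by omega⟩, cElt_succ ⟨2 * i, by omega⟩, twistAut_single, hw,
    one_add_pairShiftMatrix_mulVec_single_of_eq_succ (i := ⟨2 * i, by omega⟩) (by simp) rfl,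
    aElt_sq, ZMod.val_one, pow_one]
  simp [ofAdd_add]

lemma twistAut_cElt_last {m : ℕ} (hm : 4 ≤ m) (he : Even m) :
    twistAut (m - 3) (cElt m (m - 3)) = aElt m ^ 2 * cElt m (m - 3) := by
  obtain ⟨k, rfl⟩ := he
  let p : Fin (k + k - 3) := ⟨k + k - 4, by omega⟩
  have hc : cElt (k + k) (k + k - 3) = (1, .ofAdd (Pi.single p 1)) := by
    rw [← cElt_succ p, show (p : ℕ) + 1 = k + k - 3 by simp [p]; omega]
  have hp : Even (p : ℕ) := ⟨k - 2, by simp [p]; omega⟩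
  have hw : twistWeight (k + k - 3) p = 1 :=
    if_pos (Or.inr ⟨by simp [p]; omega, k - 2, by omega⟩)
  rw [hc, twistAut_single, hw, one_add_pairShiftMatrix_mulVec_single_of_even hp, aElt_sq,
    ZMod.val_one, pow_one]
  simp

/-- The map defined on the generators by `a ↦ a⁻¹`, `b ↦ ab`, `c_{2i+1} ↦ c_{2i+1}`,
`c_{2i+2} ↦ a²c_{2i+1}c_{2i+2}` for `0 ≤ i ≤ ⌊(m-5)/2⌋` (equivalently `2i + 5 ≤ m`),
and additionally `c_{m-3} ↦ a²c_{m-3}` if `m` is even, extends to an automorphism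
of `H` of order 2. -/
theorem dihedral_times_elementary_abelian_aut_x (m : ℕ) (hm : 4 ≤ m) :
    ∃ x : MulAut (Hgrp m),
      orderOf x = 2 ∧
      x (aElt m) = (aElt m)⁻¹ ∧
      x (bElt m) = aElt m * bElt m ∧
      (∀ i : ℕ, 2 * i + 5 ≤ m →
        x (cElt m (2 * i + 1)) = cElt m (2 * i + 1) ∧
        x (cElt m (2 * i + 2)) = (aElt m) ^ 2 * cElt m (2 * i + 1) * cElt m (2 * i + 2)) ∧
      (Even m → x (cElt m (m - 3)) = (aElt m) ^ 2 * cElt m (m - 3)) :=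
  ⟨twistAut (m - 3), orderOf_twistAut _, twistAut_aElt m, twistAut_bElt m,
    fun _ hi => ⟨twistAut_cElt_odd (by omega), twistAut_cElt_even (by omega)⟩,
    twistAut_cElt_last hm⟩
end

section
/- Let K = ⟨a²⟩ × ⟨b⟩ × ⟨c₁⟩ × ⋯ × ⟨c_{m-3}⟩ be an elementary abelian 2-group of rank m-1, with m ≥ 4. Then the map τ defined by a² ↦ b, b ↦ a², c_{2i+1} ↦ c_{2i-1}c_{2i}c_{2i+2}, c_{2i+2} ↦ c_{2i-1}c_{2i}c_{2i+1} (for 0 ≤ i ≤ ⌊(m-5)/2⌋, with convention c₋₁ = c₀ = 1), and additionally c_{m-3} ↦ c_{m-3} if m is even, extends to an automorphism of K of order 2. -/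
/-- `K`, an elementary abelian 2-group of rank `m - 1`, with basis
`a², b, c₁, …, c_{m-3}` corresponding to the coordinates `0, 1, 2, …, m - 2`. -/
abbrev Kgrp (m : ℕ) := Multiplicative (Fin (m - 1) → ZMod 2)

/-- The `j`-th basis vector of `K` (as a multiplicative generator). -/
def kGen (m j : ℕ) : Kgrp m :=
  Multiplicative.ofAdd (fun i : Fin (m - 1) => if (i : ℕ) = j then 1 else 0)

/-- The generator `a²` of `K`. -/
def aSq (m : ℕ) : Kgrp m := kGen m 0

/-- The generator `b` of `K`. -/
def bK (m : ℕ) : Kgrp m := kGen m 1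

/-- The generator `c j` of `K` for `1 ≤ j ≤ m - 3`; by convention `c 0 = 1`
(covering `c₋₁ = c₀ = 1`), and `c j = 1` for `j > m - 3`. -/
def cK (m j : ℕ) : Kgrp m := if j = 0 then 1 else kGen m (j + 1)

/-!
The coordinates `0, 1, 2, 3, …` of `a², b, c₁, c₂, …` fall into blocks `{2j, 2j + 1}`:
`{a², b}, {c₁, c₂}, {c₃, c₄}, …`, the last one being the singleton `{c_{m-3}}` when `m` is even.
In coordinates, `(τ x)_k = x_{k'} + σ_{j+1}(x)`, where `k'` is the partner of `k` in its block `j`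
and `σ_{j+1}(x)` is the coordinate sum of the next block (zero if `j = 0` or that block is
incomplete). The correction term is the same on both coordinates of a block, so `τ` preserves the
sum over each complete block, and therefore `(τ² x)_k = x_k + 2 σ_{j+1}(x) = x_k`.
-/

namespace ElementaryAbelianTau

def blockPartner (n k : ℕ) : ℕ :=
  if k % 2 = 1 then k - 1 else if k + 1 < n then k + 1 else k

section blockPartner

variable {n k : ℕ}

lemma blockPartner_lt (hk : k < n) : blockPartner n k < n := by
  unfold blockPartner; split_ifs <;> omega

lemma blockPartner_blockPartner (hk : k < n) : blockPartner n (blockPartner n k) = k := by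
  unfold blockPartner; split_ifs <;> omega

lemma blockPartner_div_two : blockPartner n k / 2 = k / 2 := by
  unfold blockPartner; split_ifs <;> omega

end blockPartner

section tau

variable {A : Type*} [AddCommMonoid A] {n : ℕ}

def nextBlockSum (x : Fin n → A) (j : ℕ) : A :=
  if h : 1 ≤ j ∧ 2 * j + 3 < n then x ⟨2 * j + 2, by omega⟩ + x ⟨2 * j + 3, h.2⟩ else 0

def tau (x : Fin n → A) (k : Fin n) : A :=
  x ⟨blockPartner n k, blockPartner_lt k.2⟩ + nextBlockSum x (k / 2)

lemma tau_add (x y : Fin n → A) : tau (x + y) = tau x + tau y := by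
  funext k
  simp only [tau, nextBlockSum, Pi.add_apply]
  split_ifs <;> abel

lemma tau_apply_blockPartner (x : Fin n → A) (k : Fin n) :
    tau x ⟨blockPartner n k, blockPartner_lt k.2⟩ = x k + nextBlockSum x (k / 2) := by
  simp only [tau, blockPartner_blockPartner k.2, blockPartner_div_two]

variable (hA : ∀ a : A, a + a = 0)
include hA

lemma nextBlockSum_tau (x : Fin n → A) (j : ℕ) : nextBlockSum (tau x) j = nextBlockSum x j := by
  unfold nextBlockSum
  split_ifs with h
  · have h2 : blockPartner n (2 * j + 2) = 2 * j + 3 := by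
      unfold blockPartner; split_ifs <;> omega
    have h3 : blockPartner n (2 * j + 3) = 2 * j + 2 := by
      unfold blockPartner; split_ifs <;> omega
    simp only [tau, h2, h3, show (2 * j + 2) / 2 = j + 1 by omega,
      show (2 * j + 3) / 2 = j + 1 by omega]
    rw [add_add_add_comm, hA, add_zero, add_comm]
  · rfl

lemma tau_tau (x : Fin n → A) : tau (tau x) = x := by
  funext k
  rw [tau, tau_apply_blockPartner, nextBlockSum_tau hA, add_assoc, hA, add_zero]

def tauEquiv : (Fin n → A) ≃+ (Fin n → A) where
  toFun := tau
  invFun := tau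
  left_inv := tau_tau hA
  right_inv := tau_tau hA
  map_add' := tau_add

end tau

def tauAut (m : ℕ) : MulAut (Kgrp m) :=
  AddEquiv.toMultiplicative (tauEquiv CharTwo.add_self_eq_zero)

section tauAut

variable {m : ℕ}

lemma tauAut_apply (x : Kgrp m) :
    tauAut m x = Multiplicative.ofAdd (tau (Multiplicative.toAdd x)) := rfl

lemma tauAut_mul_self : tauAut m * tauAut m = 1 :=
  MulEquiv.ext fun x => by
    simp only [MulAut.mul_apply, tauAut_apply, toAdd_ofAdd, tau_tau CharTwo.add_self_eq_zero]
    rfl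

lemma toAdd_tauAut_kGen_apply (j : ℕ) (k : Fin (m - 1)) :
    Multiplicative.toAdd (tauAut m (kGen m j)) k =
      (if blockPartner (m - 1) k = j then 1 else 0) +
        if 1 ≤ (k : ℕ) / 2 ∧ 2 * ((k : ℕ) / 2) + 3 < m - 1 then
          (if 2 * ((k : ℕ) / 2) + 2 = j then 1 else 0) +
            (if 2 * ((k : ℕ) / 2) + 3 = j then 1 else 0)
        else 0 := by
  simp only [tauAut_apply, kGen, toAdd_ofAdd, tau, nextBlockSum]
  split_ifs <;> rfl

lemma toAdd_kGen_apply (j : ℕ) (k : Fin (m - 1)) :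
    Multiplicative.toAdd (kGen m j) k = if (k : ℕ) = j then 1 else 0 := rfl

lemma toAdd_cK_apply (j : ℕ) (k : Fin (m - 1)) :
    Multiplicative.toAdd (cK m j) k = if j ≠ 0 ∧ (k : ℕ) = j + 1 then 1 else 0 := by
  unfold cK kGen
  split_ifs <;> simp_all

lemma tauAut_aSq (hm : 3 ≤ m) : tauAut m (aSq m) = bK m := by
  apply Multiplicative.toAdd.injective
  funext k
  simp only [aSq, bK, toAdd_tauAut_kGen_apply, toAdd_kGen_apply, blockPartner]
  split_ifs <;> first | omega | decide | contradiction

lemma tauAut_bK (hm : 3 ≤ m) : tauAut m (bK m) = aSq m := by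
  apply Multiplicative.toAdd.injective
  funext k
  simp only [aSq, bK, toAdd_tauAut_kGen_apply, toAdd_kGen_apply, blockPartner]
  split_ifs <;> first | omega | decide

lemma tauAut_ne_one (hm : 3 ≤ m) : tauAut m ≠ 1 := by
  intro h
  have hab := tauAut_aSq hm
  rw [h, MulAut.one_apply] at hab
  have := congr_arg (fun x : Kgrp m => Multiplicative.toAdd x ⟨0, by omega⟩) hab
  simp [aSq, bK, toAdd_kGen_apply] at this

lemma orderOf_tauAut (hm : 3 ≤ m) : orderOf (tauAut m) = 2 :=
  orderOf_eq_prime (by rw [sq, tauAut_mul_self]) (tauAut_ne_one hm)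

lemma tauAut_cK_odd {i : ℕ} (hi : 2 * i + 5 ≤ m) :
    tauAut m (cK m (2 * i + 1)) = cK m (2 * i - 1) * cK m (2 * i) * cK m (2 * i + 2) := by
  rw [cK, if_neg (by omega)]
  apply Multiplicative.toAdd.injective
  funext k
  simp only [toAdd_tauAut_kGen_apply, toAdd_mul, Pi.add_apply, toAdd_cK_apply, blockPartner]
  split_ifs <;> first | omega | decide

lemma tauAut_cK_even {i : ℕ} (hi : 2 * i + 5 ≤ m) :
    tauAut m (cK m (2 * i + 2)) = cK m (2 * i - 1) * cK m (2 * i) * cK m (2 * i + 1) := by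
  rw [cK, if_neg (by omega)]
  apply Multiplicative.toAdd.injective
  funext k
  simp only [toAdd_tauAut_kGen_apply, toAdd_mul, Pi.add_apply, toAdd_cK_apply, blockPartner]
  split_ifs <;> first | omega | decide

lemma tauAut_cK_sub_three (hm : Even m) : tauAut m (cK m (m - 3)) = cK m (m - 3) := by
  unfold cK
  split_ifs with h
  · exact map_one _
  apply Multiplicative.toAdd.injective
  funext k
  obtain ⟨t, rfl⟩ := hm
  simp only [toAdd_tauAut_kGen_apply, toAdd_kGen_apply, blockPartner]
  split_ifs <;> first | omega | decide

end tauAut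

end ElementaryAbelianTau

open ElementaryAbelianTau in
/-- The map `τ` defined by `a² ↦ b`, `b ↦ a²`, `c_{2i+1} ↦ c_{2i-1}c_{2i}c_{2i+2}`,
`c_{2i+2} ↦ c_{2i-1}c_{2i}c_{2i+1}` for `0 ≤ i ≤ ⌊(m-5)/2⌋` (equivalently `2i + 5 ≤ m`),
with the convention `c₋₁ = c₀ = 1`, and additionally `c_{m-3} ↦ c_{m-3}` if `m` is even,
extends to an automorphism of `K` of order 2. -/
theorem elementary_abelian_aut_tau (m : ℕ) (hm : 4 ≤ m) :
    ∃ τ : MulAut (Kgrp m),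
      orderOf τ = 2 ∧
      τ (aSq m) = bK m ∧
      τ (bK m) = aSq m ∧
      (∀ i : ℕ, 2 * i + 5 ≤ m →
        τ (cK m (2 * i + 1)) = cK m (2 * i - 1) * cK m (2 * i) * cK m (2 * i + 2) ∧
        τ (cK m (2 * i + 2)) = cK m (2 * i - 1) * cK m (2 * i) * cK m (2 * i + 1)) ∧
      (Even m → τ (cK m (m - 3)) = cK m (m - 3)) :=
  ⟨tauAut m, orderOf_tauAut (by omega), tauAut_aSq (by omega), tauAut_bK (by omega),
    fun _ hi => ⟨tauAut_cK_odd hi, tauAut_cK_even hi⟩, tauAut_cK_sub_three⟩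
end

section
/- Let H be a finite 2-group that is not cyclic. Then the image of the right regular representation of H lies in the alternating group on the underlying set of H. -/
open Subgroup Equiv

/-- Decomposition of a group as (quotient by a subgroup) × (subgroup), chosen so that
right multiplication by an element of the subgroup acts only on the second factor. -/
noncomputable def rightDecomp {H : Type} [Group H] (K : Subgroup H) :
    H ≃ (H ⧸ K) × K where
  toFun h := (QuotientGroup.mk h,
    ⟨((QuotientGroup.mk h : H ⧸ K).out)⁻¹ * h, by
      rw [← QuotientGroup.eq]; simp⟩)
  invFun p := p.1.out * (p.2 : H)
  left_inv h := by simp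
  right_inv p := by
    rcases p with ⟨q, k, hk⟩
    have h1 : (QuotientGroup.mk (q.out * k) : H ⧸ K) = q := by
      rw [← QuotientGroup.out_eq' q, QuotientGroup.eq]
      simpa using hk
    simp [h1]

theorem mulRight_conj {H : Type} [Group H] (K : Subgroup H) (g : H) (hg : g ∈ K) :
    Equiv.mulRight g =
      (rightDecomp K).symm.permCongr
        (Equiv.prodCongrRight fun _ : H ⧸ K => Equiv.mulRight (⟨g, hg⟩ : K)) := by
  ext h
  simp [rightDecomp, Equiv.permCongr, Equiv.prodCongrRight, mul_assoc]

/-- If `H` is a finite 2-group that is not cyclic, then the image of the right regular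
representation of `H` (sending `g` to the permutation `x ↦ x * g`) lies in the
alternating group on the underlying set of `H`: every right translation is an even
permutation. -/
theorem right_regular_rep_le_alt (H : Type) [Group H] [Fintype H] [DecidableEq H]
    (hp : IsPGroup 2 H) (hnc : ¬ IsCyclic H) (g : H) :
    Equiv.Perm.sign (Equiv.mulRight g) = 1 := by
  classical
  have hfact : Fact (Nat.Prime 2) := ⟨Nat.prime_two⟩
  set K := Subgroup.zpowers g with hK
  have hg : g ∈ K := Subgroup.mem_zpowers g
  -- the index of K is even
  obtain ⟨n, hn⟩ := IsPGroup.iff_card.mp hp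
  have hdvd : K.index ∣ 2 ^ n := hn ▸ Subgroup.index_dvd_card K
  have hne1 : K.index ≠ 1 := by
    intro h1
    have : K = ⊤ := Subgroup.index_eq_one.mp h1
    refine hnc ⟨⟨g, fun x => ?_⟩⟩
    have hx : x ∈ K := this ▸ Subgroup.mem_top x
    exact Subgroup.mem_zpowers_iff.mp hx
  obtain ⟨k, hk, hkeq⟩ := (Nat.dvd_prime_pow Nat.prime_two).mp hdvd
  have hkpos : 0 < k := by
    rcases Nat.eq_zero_or_pos k with h0 | h
    · rw [h0, pow_zero] at hkeq; exact absurd hkeq hne1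
    · exact h
  have heven : ∃ m, K.index = 2 * m := ⟨2 ^ (k - 1), by
    rw [hkeq, ← pow_succ']
    congr 1
    omega⟩
  obtain ⟨m, hm⟩ := heven
  -- compute the sign
  rw [mulRight_conj K g hg, Equiv.Perm.sign_permCongr,
    Equiv.Perm.sign_prodCongrRight, Finset.prod_const]
  have hcard : Fintype.card (H ⧸ K) = K.index := by
    rw [Subgroup.index, Nat.card_eq_fintype_card]
  rw [Finset.card_univ, hcard, hm, pow_mul, Int.units_sq, one_pow]
end

section
/- Let ℓ ≥ 2 be even and V = ⟨e₁⟩ × ⋯ × ⟨e_ℓ⟩ an elementary abelian 2-group of rank ℓ. Let r denote the right regular representation of V, let ω = r(e_{ℓ-1}e_ℓ), and let χ, ψ be the automorphisms of V defined (with convention e₋₁ = e₀ = 1) by e_{2i+1}^χ = e_{2i+1}, e_{2i+2}^χ = e_{2i+1}e_{2i+2}, e_{2i+1}^ψ = e_{2i-1}e_{2i}e_{2i+2}, e_{2i+2}^ψ = e_{2i-1}e_{2i}e_{2i+1} for 0 ≤ i ≤ (ℓ-2)/2. Then the subgroup ⟨χ, ψ, ω⟩ of Sym(V) is transitive on V;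 in fact it contains r(V). -/
/-- `V = ⟨e₁⟩ × ⋯ × ⟨e_ℓ⟩`, an elementary abelian 2-group of rank `ℓ`, written
multiplicatively. -/
abbrev Vgrp (l : ℕ) := Multiplicative (Fin l → ZMod 2)

/-- The generator `e j` of `V` for `1 ≤ j ≤ ℓ`; by convention `e 0 = 1`
(covering `e₋₁ = e₀ = 1`), and `e j = 1` for `j > ℓ`. -/
def eGen (l j : ℕ) : Vgrp l :=
  Multiplicative.ofAdd (fun i : Fin l => if (i : ℕ) + 1 = j then 1 else 0)

/-!
The right translations lying in `G = ⟨χ, ψ, ω⟩` form a subgroup `T` of `V`, and `T` is stable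
under `χ` and `ψ` because `α r(v) α⁻¹ = r(v^α)` for every automorphism `α`. Starting from
`e_{ℓ-1}e_ℓ ∈ T`, `χ` splits a pair `e_{2i+1}e_{2i+2} ∈ T` into its factors, since
`(e_{2i+1}e_{2i+2})^χ = e_{2i+2}`, and `e_{2i+2}^ψ e_{2i+1} = e_{2i-1}e_{2i}` is the next pair down.
Hence `T` contains every `e_j`, so `T = V`.
-/

lemma MulAut.toPerm_mul_mulRight_mul_inv {M : Type*} [Group M] (α : MulAut M) (v : M) :
    α.toEquiv * Equiv.mulRight v * α.toEquiv⁻¹ = Equiv.mulRight (α v) := by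
  ext x
  simp [Equiv.Perm.mul_apply, Equiv.Perm.inv_def]

def Subgroup.rightTranslations {M : Type*} [Group M] (G : Subgroup (Equiv.Perm M)) :
    Subgroup M where
  carrier := {v | Equiv.mulRight v ∈ G}
  one_mem' := by simp [G.one_mem]
  mul_mem' ha hb := by simpa using G.mul_mem hb ha
  inv_mem' ha := by simpa using G.inv_mem ha

namespace Subgroup

variable {M : Type*} [Group M] {G : Subgroup (Equiv.Perm M)}

@[simp]
lemma mem_rightTranslations {v : M} : v ∈ G.rightTranslations ↔ Equiv.mulRight v ∈ G :=
  Iff.rfl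

lemma map_mem_rightTranslations {α : MulAut M} (hα : α.toEquiv ∈ G) {v : M}
    (hv : v ∈ G.rightTranslations) : α v ∈ G.rightTranslations := by
  rw [mem_rightTranslations, ← MulAut.toPerm_mul_mulRight_mul_inv]
  exact G.mul_mem (G.mul_mem hα hv) (G.inv_mem hα)

end Subgroup

section CommGroup

variable {M : Type*} [CommGroup M] {T : Subgroup M} {χ ψ : MulAut M}

lemma Subgroup.mem_and_mem_of_mul_mem_of_map_eq (hχT : ∀ v ∈ T, χ v ∈ T) {a b : M}
    (ha : χ a = a) (hb : χ b = a * b) (hab : a * b ∈ T) : a ∈ T ∧ b ∈ T := by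
  have haT : a ∈ T := by
    have hχab : χ (a * b) * (a * b)⁻¹ = a := by rw [map_mul, ha, hb]; group
    exact hχab ▸ T.mul_mem (hχT _ hab) (T.inv_mem hab)
  exact ⟨haT, by simpa using T.mul_mem (T.inv_mem haT) hab⟩

lemma Subgroup.mul_mem_of_mul_mem_of_map_eq (hχT : ∀ v ∈ T, χ v ∈ T) (hψT : ∀ v ∈ T, ψ v ∈ T)
    {a b c d : M} (hc : χ c = c) (hd : χ d = c * d) (hψd : ψ d = a * b * c) (hcd : c * d ∈ T) :
    a * b ∈ T := by
  obtain ⟨hcT, hdT⟩ := T.mem_and_mem_of_mul_mem_of_map_eq hχT hc hd hcd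
  simpa [hψd] using T.mul_mem (hψT _ hdT) (T.inv_mem hcT)

end CommGroup

lemma eGen_succ {l : ℕ} (i : Fin l) : eGen l (i + 1) = Multiplicative.ofAdd (Pi.single i 1) := by
  ext j
  simp [eGen, Pi.single_apply, Fin.val_inj]

lemma Vgrp.eq_top_of_eGen_mem {l : ℕ} {T : Subgroup (Vgrp l)}
    (h : ∀ i : Fin l, eGen l (i + 1) ∈ T) : T = ⊤ := by
  refine (Subgroup.eq_top_iff' T).2 fun v => ?_
  induction v using Multiplicative.rec with | ofAdd f => ?_
  induction f using Pi.single_induction with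
  | zero => exact T.one_mem
  | add f g hf hg => exact T.mul_mem hf hg
  | single i m =>
    obtain rfl | rfl : m = 0 ∨ m = 1 := by revert m; decide
    · simp
    · simpa [eGen_succ] using h i

def ChiPsiRelations (l : ℕ) (χ ψ : MulAut (Vgrp l)) : Prop :=
  ∀ i : ℕ, 2 * i + 2 ≤ l →
    χ (eGen l (2 * i + 1)) = eGen l (2 * i + 1) ∧
    χ (eGen l (2 * i + 2)) = eGen l (2 * i + 1) * eGen l (2 * i + 2) ∧
    ψ (eGen l (2 * i + 1)) = eGen l (2 * i - 1) * eGen l (2 * i) * eGen l (2 * i + 2) ∧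
    ψ (eGen l (2 * i + 2)) = eGen l (2 * i - 1) * eGen l (2 * i) * eGen l (2 * i + 1)

namespace ChiPsiRelations

variable {l : ℕ} {χ ψ : MulAut (Vgrp l)} {T : Subgroup (Vgrp l)}

lemma pair_mem (h : ChiPsiRelations l χ ψ) (hl : Even l) (hχT : ∀ v ∈ T, χ v ∈ T)
    (hψT : ∀ v ∈ T, ψ v ∈ T) (hω : eGen l (l - 1) * eGen l l ∈ T) {i : ℕ} (hi : 2 * i + 2 ≤ l) :
    eGen l (2 * i + 1) * eGen l (2 * i + 2) ∈ T := by
  obtain ⟨c, rfl⟩ := hl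
  obtain ⟨k, hk⟩ : ∃ k, i + k + 1 = c := ⟨c - i - 1, by omega⟩
  induction k generalizing i with
  | zero =>
    rw [show 2 * i + 1 = c + c - 1 by omega, show 2 * i + 2 = c + c by omega]
    exact hω
  | succ k ih =>
    obtain ⟨hχ, hχ', -, hψ'⟩ := h (i + 1) (by omega)
    convert T.mul_mem_of_mul_mem_of_map_eq hχT hψT hχ hχ' hψ' (ih (by omega) (by omega))
      using 3 <;> omega

lemma eGen_mem (h : ChiPsiRelations l χ ψ) (hl : Even l) (hχT : ∀ v ∈ T, χ v ∈ T)
    (hψT : ∀ v ∈ T, ψ v ∈ T) (hω : eGen l (l - 1) * eGen l l ∈ T) (j : Fin l) :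
    eGen l (j + 1) ∈ T := by
  have hj : 2 * (j / 2) + 2 ≤ l := by obtain ⟨c, rfl⟩ := hl; omega
  obtain ⟨hχ, hχ', -, -⟩ := h _ hj
  obtain ⟨hodd, heven⟩ :=
    T.mem_and_mem_of_mul_mem_of_map_eq hχT hχ hχ' (h.pair_mem hl hχT hψT hω hj)
  rcases Nat.even_or_odd' j with ⟨q, hq | hq⟩
  · convert hodd using 2; omega
  · convert heven using 2; omega

end ChiPsiRelations

theorem chi_psi_omega_transitive_general (l : ℕ) (hleven : Even l)
    (χ ψ : MulAut (Vgrp l))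
    (hχψ : ∀ i : ℕ, 2 * i + 2 ≤ l →
      χ (eGen l (2 * i + 1)) = eGen l (2 * i + 1) ∧
      χ (eGen l (2 * i + 2)) = eGen l (2 * i + 1) * eGen l (2 * i + 2) ∧
      ψ (eGen l (2 * i + 1)) = eGen l (2 * i - 1) * eGen l (2 * i) * eGen l (2 * i + 2) ∧
      ψ (eGen l (2 * i + 2)) = eGen l (2 * i - 1) * eGen l (2 * i) * eGen l (2 * i + 1)) :
    (∀ v : Vgrp l, Equiv.mulRight v ∈
      Subgroup.closure {(χ.toEquiv : Equiv.Perm (Vgrp l)), (ψ.toEquiv : Equiv.Perm (Vgrp l)),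
        Equiv.mulRight (eGen l (l - 1) * eGen l l)}) ∧
    (∀ v w : Vgrp l, ∃ g ∈
      Subgroup.closure {(χ.toEquiv : Equiv.Perm (Vgrp l)), (ψ.toEquiv : Equiv.Perm (Vgrp l)),
        Equiv.mulRight (eGen l (l - 1) * eGen l l)}, g v = w) := by
  set G := Subgroup.closure {(χ.toEquiv : Equiv.Perm (Vgrp l)), (ψ.toEquiv : Equiv.Perm (Vgrp l)),
    Equiv.mulRight (eGen l (l - 1) * eGen l l)}
  have hχT : ∀ v ∈ G.rightTranslations, χ v ∈ G.rightTranslations :=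
    fun _ ↦ Subgroup.map_mem_rightTranslations (Subgroup.subset_closure (by simp))
  have hψT : ∀ v ∈ G.rightTranslations, ψ v ∈ G.rightTranslations :=
    fun _ ↦ Subgroup.map_mem_rightTranslations (Subgroup.subset_closure (by simp))
  have hω : eGen l (l - 1) * eGen l l ∈ G.rightTranslations :=
    Subgroup.subset_closure (by simp)
  have hT : G.rightTranslations = ⊤ :=
    Vgrp.eq_top_of_eGen_mem (ChiPsiRelations.eGen_mem hχψ hleven hχT hψT hω)
  have hall (v : Vgrp l) : Equiv.mulRight v ∈ G := by
    rw [← Subgroup.mem_rightTranslations, hT]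
    exact Subgroup.mem_top v
  exact ⟨hall, fun v w ↦ ⟨_, hall (v⁻¹ * w), by simp⟩⟩

/-- Let `ℓ ≥ 2` be even and `V` elementary abelian of rank `ℓ`. Let `ω` be the right
translation by `e_{ℓ-1}e_ℓ`, and let `χ, ψ` be the automorphisms of `V` defined (with
the convention `e₋₁ = e₀ = 1`) by `e_{2i+1}^χ = e_{2i+1}`, `e_{2i+2}^χ = e_{2i+1}e_{2i+2}`,
`e_{2i+1}^ψ = e_{2i-1}e_{2i}e_{2i+2}`, `e_{2i+2}^ψ = e_{2i-1}e_{2i}e_{2i+1}` for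
`0 ≤ i ≤ (ℓ-2)/2` (equivalently `2i + 2 ≤ ℓ` since `ℓ` is even). Then the subgroup
`⟨χ, ψ, ω⟩` of `Sym(V)` contains all right translations `r(v)`, and is transitive
on `V`. -/
theorem chi_psi_omega_transitive (l : ℕ) (hl2 : 2 ≤ l) (hleven : Even l)
    (χ ψ : MulAut (Vgrp l))
    (hχψ : ∀ i : ℕ, 2 * i + 2 ≤ l →
      χ (eGen l (2 * i + 1)) = eGen l (2 * i + 1) ∧
      χ (eGen l (2 * i + 2)) = eGen l (2 * i + 1) * eGen l (2 * i + 2) ∧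
      ψ (eGen l (2 * i + 1)) = eGen l (2 * i - 1) * eGen l (2 * i) * eGen l (2 * i + 2) ∧
      ψ (eGen l (2 * i + 2)) = eGen l (2 * i - 1) * eGen l (2 * i) * eGen l (2 * i + 1)) :
    (∀ v : Vgrp l, Equiv.mulRight v ∈
      Subgroup.closure {(χ.toEquiv : Equiv.Perm (Vgrp l)), (ψ.toEquiv : Equiv.Perm (Vgrp l)),
        Equiv.mulRight (eGen l (l - 1) * eGen l l)}) ∧
    (∀ v w : Vgrp l, ∃ g ∈
      Subgroup.closure {(χ.toEquiv : Equiv.Perm (Vgrp l)), (ψ.toEquiv : Equiv.Perm (Vgrp l)),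
        Equiv.mulRight (eGen l (l - 1) * eGen l l)}, g v = w) :=
  chi_psi_omega_transitive_general l hleven χ ψ hχψ
end

section
/- In the setting of the previous lemma (ℓ ≥ 2 even, V elementary abelian of rank ℓ with basis e₁,…,e_ℓ, automorphisms χ and ψ, translation ω = r(e_{ℓ-1}e_ℓ)): the translations r(e_ℓ) = χ⁻¹ωχ and r(e_{ℓ-1}) = ω·r(e_ℓ) lie in ⟨χ, ψ, ω⟩, and for each 0 ≤ i ≤ (ℓ-2)/2, if r(e_{ℓ-2i+1}),…,r(e_ℓ) ∈ ⟨χ,ψ,ω⟩ then r(e_{ℓ-2i-1}), r(e_{ℓ-2i}) ∈ ⟨χ,ψ,ω⟩. -/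
/-- Every element of `Vgrp l` is an involution. -/
lemma Vgrp.sq {l : ℕ} (v : Vgrp l) : v * v = 1 := by
  have h : Multiplicative.toAdd v + Multiplicative.toAdd v = 0 := by
    funext i
    exact CharTwo.add_self_eq_zero _
  exact h

/-- Product of right translations is the right translation by the product. -/
lemma mulRight_mul' {l : ℕ} (v w : Vgrp l) :
    (Equiv.mulRight v : Equiv.Perm (Vgrp l)) * Equiv.mulRight w = Equiv.mulRight (v * w) := by
  ext x
  simp [mul_assoc, mul_left_comm, mul_comm]

/-- Conjugating a right translation by an automorphism: `σ r(v) σ⁻¹ = r(σ v)`. -/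
lemma conj_mulRight {l : ℕ} (σ : MulAut (Vgrp l)) (v : Vgrp l) :
    (σ.toEquiv : Equiv.Perm (Vgrp l)) * Equiv.mulRight v * (σ.toEquiv : Equiv.Perm (Vgrp l))⁻¹
      = Equiv.mulRight (σ v) := by
  ext x
  simp [Equiv.Perm.mul_apply, Equiv.Perm.inv_def, map_mul]

/-- In the setting of the transitivity lemma (`ℓ ≥ 2` even, `V` elementary abelian of
rank `ℓ`, automorphisms `χ` and `ψ` as defined there, `ω = r(e_{ℓ-1}e_ℓ)`):
the translations `r(e_ℓ) = χ⁻¹ωχ` and `r(e_{ℓ-1}) = ω·r(e_ℓ)` lie in `N = ⟨χ, ψ, ω⟩`,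
and for each `0 ≤ i ≤ (ℓ-2)/2`, if `r(e_{ℓ-2i+1}), …, r(e_ℓ) ∈ N` then
`r(e_{ℓ-2i-1}), r(e_{ℓ-2i}) ∈ N`. -/
theorem translations_in_chi_psi_omega (l : ℕ) (hl2 : 2 ≤ l) (hleven : Even l)
    (χ ψ : MulAut (Vgrp l))
    (hχψ : ∀ i : ℕ, 2 * i + 2 ≤ l →
      χ (eGen l (2 * i + 1)) = eGen l (2 * i + 1) ∧
      χ (eGen l (2 * i + 2)) = eGen l (2 * i + 1) * eGen l (2 * i + 2) ∧
      ψ (eGen l (2 * i + 1)) = eGen l (2 * i - 1) * eGen l (2 * i) * eGen l (2 * i + 2) ∧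
      ψ (eGen l (2 * i + 2)) = eGen l (2 * i - 1) * eGen l (2 * i) * eGen l (2 * i + 1)) :
    letI ω : Equiv.Perm (Vgrp l) := Equiv.mulRight (eGen l (l - 1) * eGen l l)
    letI N : Subgroup (Equiv.Perm (Vgrp l)) :=
      Subgroup.closure {(χ.toEquiv : Equiv.Perm (Vgrp l)), (ψ.toEquiv : Equiv.Perm (Vgrp l)), ω}
    (Equiv.mulRight (eGen l l) =
        (χ.toEquiv : Equiv.Perm (Vgrp l))⁻¹ * ω * (χ.toEquiv : Equiv.Perm (Vgrp l))) ∧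
    (Equiv.mulRight (eGen l (l - 1)) = ω * Equiv.mulRight (eGen l l)) ∧
    Equiv.mulRight (eGen l l) ∈ N ∧
    Equiv.mulRight (eGen l (l - 1)) ∈ N ∧
    (∀ i : ℕ, 2 * i + 2 ≤ l →
      (∀ j : ℕ, l - 2 * i + 1 ≤ j → j ≤ l → Equiv.mulRight (eGen l j) ∈ N) →
      Equiv.mulRight (eGen l (l - 2 * i - 1)) ∈ N ∧
      Equiv.mulRight (eGen l (l - 2 * i)) ∈ N) := by
  set ω : Equiv.Perm (Vgrp l) := Equiv.mulRight (eGen l (l - 1) * eGen l l) with hω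
  set N : Subgroup (Equiv.Perm (Vgrp l)) :=
    Subgroup.closure {(χ.toEquiv : Equiv.Perm (Vgrp l)), (ψ.toEquiv : Equiv.Perm (Vgrp l)), ω}
    with hN
  obtain ⟨m, hm⟩ := hleven
  have hm1 : 1 ≤ m := by omega
  have hχN : (χ.toEquiv : Equiv.Perm (Vgrp l)) ∈ N := Subgroup.subset_closure (by simp)
  have hψN : (ψ.toEquiv : Equiv.Perm (Vgrp l)) ∈ N := Subgroup.subset_closure (by simp)
  have hωN : ω ∈ N := Subgroup.subset_closure (by simp)
  -- χ (e_l) = e_{l-1} * e_l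
  have key1 : χ (eGen l l) = eGen l (l - 1) * eGen l l := by
    obtain ⟨-, h2, -, -⟩ := hχψ (m - 1) (by omega)
    rw [show 2 * (m - 1) + 1 = l - 1 by omega, show 2 * (m - 1) + 2 = l by omega] at h2
    exact h2
  have hconj1 : (χ.toEquiv : Equiv.Perm (Vgrp l)) * Equiv.mulRight (eGen l l) *
      (χ.toEquiv : Equiv.Perm (Vgrp l))⁻¹ = ω := by
    rw [conj_mulRight, key1]
  have part1 : Equiv.mulRight (eGen l l) =
      (χ.toEquiv : Equiv.Perm (Vgrp l))⁻¹ * ω * (χ.toEquiv : Equiv.Perm (Vgrp l)) := by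
    rw [← hconj1]; group
  have part2 : Equiv.mulRight (eGen l (l - 1)) = ω * Equiv.mulRight (eGen l l) := by
    show Equiv.mulRight (eGen l (l - 1)) =
      Equiv.mulRight (eGen l (l - 1) * eGen l l) * Equiv.mulRight (eGen l l)
    rw [mulRight_mul', mul_assoc, Vgrp.sq, mul_one]
  have part3 : Equiv.mulRight (eGen l l) ∈ N := by
    rw [part1]
    exact mul_mem (mul_mem (inv_mem hχN) hωN) hχN
  have part4 : Equiv.mulRight (eGen l (l - 1)) ∈ N := by
    rw [part2]
    exact mul_mem hωN part3
  refine ⟨part1, part2, part3, part4, ?_⟩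
  intro i hi H
  have hk1 : l - 2 * i - 1 = 2 * (m - i - 1) + 1 := by omega
  have hk2 : l - 2 * i = 2 * (m - i - 1) + 2 := by omega
  set k := m - i - 1 with hk
  -- Step A: r(e_{2k+1} e_{2k+2}) ∈ N
  have hA : Equiv.mulRight (eGen l (2 * k + 1) * eGen l (2 * k + 2)) ∈ N := by
    rcases Nat.eq_zero_or_pos i with h0 | hpos
    · have : eGen l (2 * k + 1) * eGen l (2 * k + 2) = eGen l (l - 1) * eGen l l := by
        rw [show 2 * k + 1 = l - 1 by omega, show 2 * k + 2 = l by omega]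
      rw [this]
      exact hωN
    · obtain ⟨-, -, hψ1, -⟩ := hχψ (k + 1) (by omega)
      rw [show 2 * (k + 1) + 1 = 2 * k + 3 by omega, show 2 * (k + 1) + 2 = 2 * k + 4 by omega,
        show 2 * (k + 1) - 1 = 2 * k + 1 by omega,
        show 2 * (k + 1) = 2 * k + 2 by omega] at hψ1
      have h3 : Equiv.mulRight (eGen l (2 * k + 3)) ∈ N := H (2 * k + 3) (by omega) (by omega)
      have h4 : Equiv.mulRight (eGen l (2 * k + 4)) ∈ N := H (2 * k + 4) (by omega) (by omega)
      have hc := conj_mulRight ψ (eGen l (2 * k + 3))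
      rw [hψ1] at hc
      have heq : Equiv.mulRight (eGen l (2 * k + 1) * eGen l (2 * k + 2)) =
          ((ψ.toEquiv : Equiv.Perm (Vgrp l)) * Equiv.mulRight (eGen l (2 * k + 3)) *
            (ψ.toEquiv : Equiv.Perm (Vgrp l))⁻¹) * Equiv.mulRight (eGen l (2 * k + 4)) := by
        rw [hc, mulRight_mul', mul_assoc, Vgrp.sq, mul_one]
      rw [heq]
      exact mul_mem (mul_mem (mul_mem hψN h3) (inv_mem hψN)) h4
  -- Step B: r(e_{2k+2}) ∈ N
  obtain ⟨-, hχ2, -, -⟩ := hχψ k (by omega)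
  have hc2 := conj_mulRight χ (eGen l (2 * k + 2))
  rw [hχ2] at hc2
  have hB : Equiv.mulRight (eGen l (2 * k + 2)) ∈ N := by
    have heq : Equiv.mulRight (eGen l (2 * k + 2)) =
        (χ.toEquiv : Equiv.Perm (Vgrp l))⁻¹ *
          Equiv.mulRight (eGen l (2 * k + 1) * eGen l (2 * k + 2)) *
          (χ.toEquiv : Equiv.Perm (Vgrp l)) := by
      rw [← hc2]; group
    rw [heq]
    exact mul_mem (mul_mem (inv_mem hχN) hA) hχN
  -- Step C: r(e_{2k+1}) ∈ N
  have hC : Equiv.mulRight (eGen l (2 * k + 1)) ∈ N := by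
    have heq : Equiv.mulRight (eGen l (2 * k + 1)) =
        Equiv.mulRight (eGen l (2 * k + 1) * eGen l (2 * k + 2)) *
          Equiv.mulRight (eGen l (2 * k + 2)) := by
      rw [mulRight_mul', mul_assoc, Vgrp.sq, mul_one]
    rw [heq]
    exact mul_mem hA hB
  rw [hk1, hk2]
  exact ⟨hC, hB⟩
end

section
/- Let Γ be a connected cubic vertex-transitive graph and A = Aut(Γ). If A is not transitive on the arcs of Γ, then for every vertex v the stabilizer A_v is a 2-group. -/
/-- Let `Γ` be a connected cubic graph and let a group `A` act faithfully on the
vertices of `Γ` by graph automorphisms, vertex-transitively but not transitively on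
arcs (ordered pairs of adjacent vertices). Then every vertex stabilizer `A_v` is a
2-group. -/
theorem stabilizer_is_two_group_of_cubic_not_arc_transitive
    (V : Type) [Fintype V] (Γ : SimpleGraph V) [DecidableRel Γ.Adj]
    (hconn : Γ.Connected) (hcubic : ∀ v : V, Γ.degree v = 3)
    (A : Type) [Group A] [MulAction A V]
    (hauto : ∀ (a : A) (u v : V), Γ.Adj u v → Γ.Adj (a • u) (a • v))
    (hfaithful : ∀ a : A, (∀ v : V, a • v = v) → a = 1)
    (hvtrans : ∀ u v : V, ∃ a : A, a • u = v)
    (hnotarc : ¬ ∀ u v u' v' : V, Γ.Adj u v → Γ.Adj u' v' →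
      ∃ a : A, a • u = u' ∧ a • v = v') :
    ∀ v : V, IsPGroup 2 (MulAction.stabilizer A v) := by
  classical
  -- Key local lemma: an odd-order element fixing a vertex fixes all its neighbors.
  have key : ∀ (g : A), Odd (orderOf g) → ∀ u w : V, g • u = u → Γ.Adj u w → g • w = w := by
    intro g hodd u w hu hadj
    by_contra hne
    apply hnotarc
    -- first, `g • g • w ≠ w` using oddness
    have h2 : g • g • w ≠ w := by
      intro h2
      obtain ⟨m, hm⟩ := hodd
      have hpow : ∀ k : ℕ, (g ^ (2 * k)) • w = w := by
        intro k
        induction k with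
        | zero => simp
        | succ n ih =>
            have : 2 * (n + 1) = (2 * n) + 1 + 1 := by ring
            rw [this, pow_succ, pow_succ, mul_smul, mul_smul, h2, ih]
      have h1 : g ^ orderOf g • w = w := by rw [pow_orderOf_eq_one]; simp
      rw [hm, pow_succ', mul_smul, hpow m] at h1
      exact hne h1
    have hgw : g • w ≠ w := hne
    have hggw_gw : g • g • w ≠ g • w := fun h => hgw (smul_left_cancel g h)
    -- the three neighbors
    have adj1 : Γ.Adj u (g • w) := by
      have := hauto g u w hadj; rwa [hu] at this
    have adj2 : Γ.Adj u (g • g • w) := by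
      have := hauto g u (g • w) adj1; rwa [hu] at this
    -- the neighbor finset is exactly {w, g•w, g•g•w}
    set s : Finset V := {w, g • w, g • g • w} with hs
    have hscard : s.card = 3 := by
      rw [hs]
      rw [Finset.card_insert_of_notMem (by simp [Ne.symm hgw, Ne.symm h2])]
      rw [Finset.card_insert_of_notMem (by simp [Ne.symm hggw_gw])]
      simp
    have hsub : s ⊆ Γ.neighborFinset u := by
      intro x hx
      rw [hs] at hx
      simp only [Finset.mem_insert, Finset.mem_singleton] at hx
      rcases hx with h | h | h <;> subst h <;>
        simp [SimpleGraph.mem_neighborFinset, hadj, adj1, adj2]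
    have heq : s = Γ.neighborFinset u := by
      apply Finset.eq_of_subset_of_card_le hsub
      rw [SimpleGraph.card_neighborFinset_eq_degree, hcubic, hscard]
    -- so the stabilizer of u is transitive on neighbors of u
    have hnbr : ∀ x : V, Γ.Adj u x → ∃ t : A, t • u = u ∧ t • w = x := by
      intro x hx
      have hxmem : x ∈ s := by rw [heq, SimpleGraph.mem_neighborFinset]; exact hx
      rw [hs] at hxmem
      simp only [Finset.mem_insert, Finset.mem_singleton] at hxmem
      rcases hxmem with h | h | h
      · exact ⟨1, by simp, by simp [h]⟩
      · exact ⟨g, hu, by rw [h]⟩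
      · exact ⟨g * g, by rw [mul_smul, hu, hu], by rw [mul_smul, h]⟩
    -- deduce arc-transitivity
    intro p q p' q' hpq hpq'
    obtain ⟨c₁, hc₁⟩ := hvtrans p u
    obtain ⟨c₂, hc₂⟩ := hvtrans p' u
    have hq1 : Γ.Adj u (c₁ • q) := by
      have := hauto c₁ p q hpq; rwa [hc₁] at this
    have hq2 : Γ.Adj u (c₂ • q') := by
      have := hauto c₂ p' q' hpq'; rwa [hc₂] at this
    obtain ⟨t₁, ht₁u, ht₁w⟩ := hnbr _ hq1
    obtain ⟨t₂, ht₂u, ht₂w⟩ := hnbr _ hq2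
    refine ⟨c₂⁻¹ * (t₂ * (t₁⁻¹ * c₁)), ?_, ?_⟩
    · have h1 : t₁⁻¹ • u = u := by rw [inv_smul_eq_iff, ht₁u]
      rw [mul_smul, mul_smul, mul_smul, hc₁, h1, ht₂u, inv_smul_eq_iff, hc₂]
    · have h1 : t₁⁻¹ • (c₁ • q) = w := by rw [inv_smul_eq_iff, ht₁w]
      rw [mul_smul, mul_smul, mul_smul, h1, ht₂w, inv_smul_smul]
  -- Spread along walks: an odd-order element fixing a vertex fixes everything.
  have spread : ∀ (g : A), Odd (orderOf g) → ∀ (a x : V) (p : Γ.Walk a x),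
      g • a = a → g • x = x := by
    intro g hodd a x p
    induction p with
    | nil => exact id
    | cons hadj p ih => intro ha; exact ih (key g hodd _ _ ha hadj)
  -- A is finite (faithful action on finite set)
  have hinj : Function.Injective (fun a : A => (fun x : V => a • x)) := by
    intro a b h
    have hall : ∀ x : V, (b⁻¹ * a) • x = x := by
      intro x
      have : a • x = b • x := congrFun h x
      rw [mul_smul, this, inv_smul_smul]
    have : b⁻¹ * a = 1 := hfaithful _ hall
    rw [inv_mul_eq_one] at this
    exact this.symm
  haveI : Finite A := Finite.of_injective _ hinj
  -- Main conclusion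
  intro v g
  set g' : A := (g : A) with hg'
  have hordpos : orderOf g' ≠ 0 := (orderOf_pos g').ne'
  set k : ℕ := (orderOf g').factorization 2 with hk
  refine ⟨k, ?_⟩
  set h' : A := g' ^ (2 ^ k) with hh'
  have hdvd : 2 ^ k ∣ orderOf g' := Nat.ordProj_dvd _ _
  have hordh : orderOf h' = orderOf g' / 2 ^ k := by
    rw [hh', orderOf_pow, Nat.gcd_eq_right hdvd]
  have hoddh : Odd (orderOf h') := by
    rw [hordh]
    have h2 := Nat.not_dvd_ordCompl Nat.prime_two hordpos
    rcases Nat.even_or_odd (orderOf g' / 2 ^ k) with he | ho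
    · exact absurd (by rw [hk] at he; exact he.two_dvd) h2
    · exact ho
  have hfixv : h' • v = v := by
    have hm : h' ∈ MulAction.stabilizer A v := pow_mem g.2 _
    exact hm
  have hone : h' = 1 := hfaithful _ (fun x => by
    obtain ⟨p⟩ := hconn v x
    exact spread h' hoddh v x p hfixv)
  apply Subtype.ext
  rw [SubmonoidClass.coe_pow]
  exact hone
end
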